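/- Let F ∈ 𝓢(γ), γ ≥ 0. Then for every n ≥ 1, the n-fold convolution satisfies lim_{x→∞} (F^{*n})̄(x)/F̄(x) = n (F̂(γ))^{n−1}, where F̂(γ) = ∫ e^{γx} F(dx). -/

import Mathlib

set_option maxHeartbeats 1000000


open MeasureTheory Filter Real Set Asymptotics

/-- Tail of a distribution (measure) on ℝ. -/
noncomputable def mtail (μ : Measure ℝ) (x : ℝ) : ℝ := (μ (Set.Ioi x)).toReal

/-- The exponential-like-tailed class 𝓛(γ). -/
def memL (μ : Measure ℝ) (γ : ℝ) : Prop :=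
  ∀ y : ℝ, Tendsto (fun x => mtail μ (x - y) / mtail μ x) atTop (nhds (Real.exp (γ * y)))

/-- V̂(γ) = ∫ e^{γ x} V(dx). -/
noncomputable def mgfAt (μ : Measure ℝ) (γ : ℝ) : ℝ := ∫ x, Real.exp (γ * x) ∂μ

/-- The convolution-equivalent class 𝓢(γ). -/
def memS (μ : Measure ℝ) (γ : ℝ) : Prop :=
  memL μ γ ∧
    Tendsto (fun x => mtail (Measure.conv μ μ) x / mtail μ x) atTop
      (nhds (2 * mgfAt μ γ))

/-- n-fold convolution power of a distribution on ℝ. -/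
noncomputable def convPow (μ : Measure ℝ) : ℕ → Measure ℝ
  | 0 => Measure.dirac 0
  | n + 1 => Measure.conv (convPow μ n) μ


namespace StmtAux

lemma mtail_nonneg (μ : Measure ℝ) (x : ℝ) : 0 ≤ mtail μ x := ENNReal.toReal_nonneg

lemma mtail_anti (μ : Measure ℝ) [IsFiniteMeasure μ] : Antitone (mtail μ) := by
  intro a b hab
  exact ENNReal.toReal_mono (measure_ne_top μ _) (measure_mono (Set.Ioi_subset_Ioi hab))

lemma mtail_le_one (μ : Measure ℝ) [IsProbabilityMeasure μ] (x : ℝ) : mtail μ x ≤ 1 :=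
  ENNReal.toReal_le_of_le_ofReal one_pos.le (by simpa using prob_le_one)

lemma ofReal_mtail (μ : Measure ℝ) [IsFiniteMeasure μ] (x : ℝ) :
    ENNReal.ofReal (mtail μ x) = μ (Set.Ioi x) := ENNReal.ofReal_toReal (measure_ne_top μ _)

lemma measurable_mtail (μ : Measure ℝ) [IsFiniteMeasure μ] : Measurable (mtail μ) :=
  (mtail_anti μ).measurable

lemma measurable_tailE (μ : Measure ℝ) [IsFiniteMeasure μ] :
    Measurable (fun z => μ (Set.Ioi z)) := by
  have : (fun z => μ (Set.Ioi z)) = fun z => ENNReal.ofReal (mtail μ z) := by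
    ext z; rw [ofReal_mtail]
  rw [this]
  exact ENNReal.measurable_ofReal.comp (measurable_mtail μ)

lemma mtail_pos {μ : Measure ℝ} [IsFiniteMeasure μ] {γ : ℝ} (h : memL μ γ) (x : ℝ) :
    0 < mtail μ x := by
  rcases lt_or_eq_of_le (mtail_nonneg μ x) with h' | h'
  · exact h'
  exfalso
  have hev : ∀ᶠ z in atTop, mtail μ (z - 0) / mtail μ z = 0 := by
    filter_upwards [eventually_ge_atTop x] with z hz
    have hz0 : mtail μ z = 0 :=
      le_antisymm (h'.symm ▸ mtail_anti μ hz) (mtail_nonneg μ z)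
    simp [hz0]
  have h1 : Tendsto (fun z => mtail μ (z - 0) / mtail μ z) atTop (nhds 0) :=
    tendsto_const_nhds.congr' (by filter_upwards [hev] with z hz using hz.symm)
  have := tendsto_nhds_unique (h 0) h1
  simp at this


def S1 (T x : ℝ) : Set (ℝ × ℝ) := {p | x < p.1 + p.2 ∧ p.1 ≤ T}
def S2 (T x : ℝ) : Set (ℝ × ℝ) := {p | x < p.1 + p.2 ∧ T < p.1 ∧ p.2 ≤ T}
def S3 (T x : ℝ) : Set (ℝ × ℝ) := {p | x < p.1 + p.2 ∧ T < p.1 ∧ T < p.2}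

lemma measurable_add2 : Measurable (fun p : ℝ × ℝ => p.1 + p.2) :=
  measurable_fst.add measurable_snd

lemma measS1 (T x : ℝ) : MeasurableSet (S1 T x) :=
  (measurableSet_lt measurable_const measurable_add2).inter
    (measurable_fst measurableSet_Iic)

lemma measS2 (T x : ℝ) : MeasurableSet (S2 T x) :=
  (measurableSet_lt measurable_const measurable_add2).inter
    ((measurable_fst measurableSet_Ioi).inter (measurable_snd measurableSet_Iic))

lemma measS3 (T x : ℝ) : MeasurableSet (S3 T x) :=
  (measurableSet_lt measurable_const measurable_add2).inter
    ((measurable_fst measurableSet_Ioi).inter (measurable_snd measurableSet_Ioi))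

lemma conv_Ioi (μ ν : Measure ℝ) [SFinite μ] [SFinite ν] (x : ℝ) :
    (μ.conv ν) (Set.Ioi x) = (μ.prod ν) {p : ℝ × ℝ | x < p.1 + p.2} := by
  rw [Measure.conv, Measure.map_apply measurable_add2 measurableSet_Ioi]
  rfl

lemma split_eq (T x : ℝ) :
    {p : ℝ × ℝ | x < p.1 + p.2} = S1 T x ∪ S2 T x ∪ S3 T x := by
  ext p
  simp only [S1, S2, S3, Set.mem_setOf_eq, Set.mem_union]
  constructor
  · intro h
    rcases le_or_gt p.1 T with h1 | h1
    · exact Or.inl (Or.inl ⟨h, h1⟩)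
    · rcases le_or_gt p.2 T with h2 | h2
      · exact Or.inl (Or.inr ⟨h, h1, h2⟩)
      · exact Or.inr ⟨h, h1, h2⟩
  · rintro ((⟨h, -⟩ | ⟨h, -, -⟩) | ⟨h, -, -⟩) <;> exact h

lemma prod_split (μ ν : Measure ℝ) [SFinite μ] [SFinite ν] (T x : ℝ) :
    (μ.prod ν) {p : ℝ × ℝ | x < p.1 + p.2} =
      (μ.prod ν) (S1 T x) + (μ.prod ν) (S2 T x) + (μ.prod ν) (S3 T x) := by
  rw [split_eq T x]
  rw [measure_union ?d1 (measS3 T x), measure_union ?d2 (measS2 T x)]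
  case d2 =>
    rw [Set.disjoint_left]
    rintro p ⟨h, h1⟩ ⟨-, h2, -⟩
    exact absurd h1 (not_le.2 h2)
  case d1 =>
    rw [Set.disjoint_left]
    rintro p hp hq
    rcases hp with ⟨-, h1⟩ | ⟨-, -, h2⟩
    · exact absurd hq.2.1 (not_lt.2 h1)
    · exact absurd hq.2.2 (not_lt.2 h2)

lemma prodS1 (μ ν : Measure ℝ) [SFinite μ] [SFinite ν] (T x : ℝ) :
    (μ.prod ν) (S1 T x) = ∫⁻ y in Set.Iic T, ν (Set.Ioi (x - y)) ∂μ := by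
  rw [Measure.prod_apply (measS1 T x)]
  have h : ∀ y : ℝ, ν (Prod.mk y ⁻¹' S1 T x)
      = (Set.Iic T).indicator (fun y => ν (Set.Ioi (x - y))) y := by
    intro y
    by_cases hy : y ≤ T
    · have : Prod.mk y ⁻¹' S1 T x = Set.Ioi (x - y) := by
        ext u; simp only [S1, Set.mem_preimage, Set.mem_setOf_eq, Set.mem_Ioi]
        constructor
        · intro h; linarith [h.1]
        · intro h; exact ⟨by linarith, hy⟩
      simp [this, Set.indicator_of_mem (Set.mem_Iic.2 hy)]
    · have : Prod.mk y ⁻¹' S1 T x = ∅ := by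
        ext u; simp only [S1, Set.mem_preimage, Set.mem_setOf_eq, Set.mem_empty_iff_false]
        tauto
      simp [this, Set.indicator_of_notMem (fun h => hy (Set.mem_Iic.1 h))]
  simp_rw [h]
  rw [lintegral_indicator measurableSet_Iic]

lemma prodS2 (μ ν : Measure ℝ) [SFinite μ] [SFinite ν] (T x : ℝ) (hx : 2 * T ≤ x) :
    (μ.prod ν) (S2 T x) = ∫⁻ u in Set.Iic T, μ (Set.Ioi (x - u)) ∂ν := by
  rw [Measure.prod_apply_symm (measS2 T x)]
  have h : ∀ u : ℝ, μ ((fun y => (y, u)) ⁻¹' S2 T x)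
      = (Set.Iic T).indicator (fun u => μ (Set.Ioi (x - u))) u := by
    intro u
    by_cases hu : u ≤ T
    · have : (fun y => (y, u)) ⁻¹' S2 T x = Set.Ioi (x - u) := by
        ext y; simp only [S2, Set.mem_preimage, Set.mem_setOf_eq, Set.mem_Ioi]
        constructor
        · intro h; linarith [h.1]
        · intro h; exact ⟨by linarith, by linarith, hu⟩
      simp [this, Set.indicator_of_mem (Set.mem_Iic.2 hu)]
    · have : (fun y => (y, u)) ⁻¹' S2 T x = ∅ := by
        ext y; simp only [S2, Set.mem_preimage, Set.mem_setOf_eq, Set.mem_empty_iff_false]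
        tauto
      simp [this, Set.indicator_of_notMem (fun h => hu (Set.mem_Iic.1 h))]
  simp_rw [h]
  rw [lintegral_indicator measurableSet_Iic]

lemma prodS3 (μ ν : Measure ℝ) [SFinite μ] [SFinite ν] (T x : ℝ) :
    (μ.prod ν) (S3 T x) = ∫⁻ u in Set.Ioi T, μ (Set.Ioi (max T (x - u))) ∂ν := by
  rw [Measure.prod_apply_symm (measS3 T x)]
  have h : ∀ u : ℝ, μ ((fun y => (y, u)) ⁻¹' S3 T x)
      = (Set.Ioi T).indicator (fun u => μ (Set.Ioi (max T (x - u)))) u := by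
    intro u
    by_cases hu : T < u
    · have : (fun y => (y, u)) ⁻¹' S3 T x = Set.Ioi (max T (x - u)) := by
        ext y; simp only [S3, Set.mem_preimage, Set.mem_setOf_eq, Set.mem_Ioi, max_lt_iff]
        constructor
        · intro h; exact ⟨h.2.1, by linarith [h.1]⟩
        · intro h; exact ⟨by linarith [h.2], h.1, hu⟩
      simp [this, Set.indicator_of_mem (Set.mem_Ioi.2 hu)]
    · have : (fun y => (y, u)) ⁻¹' S3 T x = ∅ := by
        ext y; simp only [S3, Set.mem_preimage, Set.mem_setOf_eq, Set.mem_empty_iff_false]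
        tauto
      simp [this, Set.indicator_of_notMem (fun h => hu (Set.mem_Ioi.1 h))]
  simp_rw [h]
  rw [lintegral_indicator measurableSet_Ioi]

lemma lint_toReal (μ ν : Measure ℝ) [IsFiniteMeasure μ] [IsFiniteMeasure ν] (T x : ℝ) :
    (∫⁻ y in Set.Iic T, ν (Set.Ioi (x - y)) ∂μ).toReal
      = ∫ y in Set.Iic T, mtail ν (x - y) ∂μ := by
  refine (integral_toReal ?_ ?_).symm
  · exact ((measurable_tailE ν).comp (measurable_const.sub measurable_id)).aemeasurable
  · exact Filter.Eventually.of_forall (fun y => measure_lt_top ν _)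


lemma subset_S1 (T x : ℝ) : S1 T x ⊆ {p : ℝ × ℝ | x < p.1 + p.2} :=
  fun _ hp => hp.1

lemma decomp (μ ν : Measure ℝ) [IsFiniteMeasure μ] [IsFiniteMeasure ν] (T x : ℝ)
    (hx : 2 * T ≤ x) :
    mtail (μ.conv ν) x = (∫ y in Set.Iic T, mtail ν (x - y) ∂μ)
      + (∫ u in Set.Iic T, mtail μ (x - u) ∂ν) + ((μ.prod ν) (S3 T x)).toReal := by
  have h1 : (μ.prod ν) (S1 T x) ≠ ⊤ := measure_ne_top _ _
  have h2 : (μ.prod ν) (S2 T x) ≠ ⊤ := measure_ne_top _ _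
  have h3 : (μ.prod ν) (S3 T x) ≠ ⊤ := measure_ne_top _ _
  show ((μ.conv ν) (Set.Ioi x)).toReal = _
  rw [conv_Ioi, prod_split μ ν T x, ENNReal.toReal_add (by exact ENNReal.add_ne_top.2 ⟨h1, h2⟩) h3,
    ENNReal.toReal_add h1 h2, prodS1, prodS2 μ ν T x hx, lint_toReal μ ν T x, lint_toReal ν μ T x]

lemma tail_ge_S1 (μ ν : Measure ℝ) [IsFiniteMeasure μ] [IsFiniteMeasure ν] (T x : ℝ) :
    (∫ y in Set.Iic T, mtail ν (x - y) ∂μ) ≤ mtail (μ.conv ν) x := by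
  rw [← lint_toReal μ ν T x, ← prodS1]
  show _ ≤ ((μ.conv ν) (Set.Ioi x)).toReal
  rw [conv_Ioi]
  exact ENNReal.toReal_mono (measure_ne_top _ _) (measure_mono (subset_S1 T x))

lemma S3_le (μ μ' ν : Measure ℝ) [IsFiniteMeasure μ] [IsFiniteMeasure μ']
    [IsFiniteMeasure ν] (K : ℝ) (hK : 0 ≤ K) (h : ∀ z, mtail μ z ≤ K * mtail μ' z) (T x : ℝ) :
    ((μ.prod ν) (S3 T x)).toReal ≤ K * ((μ'.prod ν) (S3 T x)).toReal := by
  have key : (μ.prod ν) (S3 T x) ≤ ENNReal.ofReal K * (μ'.prod ν) (S3 T x) := by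
    rw [prodS3, prodS3]
    have hm : Measurable (fun u : ℝ => μ' (Set.Ioi (T ⊔ (x - u)))) :=
      (measurable_tailE μ').comp (measurable_const.max (measurable_const.sub measurable_id))
    rw [← lintegral_const_mul _ hm]
    refine lintegral_mono fun u => ?_
    calc μ (Set.Ioi (max T (x - u))) = ENNReal.ofReal (mtail μ (max T (x - u))) :=
          (ofReal_mtail μ _).symm
      _ ≤ ENNReal.ofReal (K * mtail μ' (max T (x - u))) := ENNReal.ofReal_le_ofReal (h _)
      _ = ENNReal.ofReal K * ENNReal.ofReal (mtail μ' (max T (x - u))) :=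
          ENNReal.ofReal_mul hK
      _ = ENNReal.ofReal K * μ' (Set.Ioi (max T (x - u))) := by rw [ofReal_mtail]
  calc ((μ.prod ν) (S3 T x)).toReal
      ≤ (ENNReal.ofReal K * (μ'.prod ν) (S3 T x)).toReal :=
        ENNReal.toReal_mono (by finiteness) key
    _ = K * ((μ'.prod ν) (S3 T x)).toReal := by
        rw [ENNReal.toReal_mul, ENNReal.toReal_ofReal hK]

lemma tendsto_term (γ T c K : ℝ) (F W : Measure ℝ) [IsFiniteMeasure F] [IsFiniteMeasure W]
    (hL : memL F γ) (hpos : ∀ x, 0 < mtail F x)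
    (g : ℝ → ℝ) (hganti : Antitone g) (hgm : Measurable g) (hg0 : ∀ z, 0 ≤ g z)
    (hgK : ∀ z, g z ≤ K * mtail F z)
    (hgt : ∀ u : ℝ, Tendsto (fun x => g (x - u) / mtail F x) atTop
      (nhds (c * Real.exp (γ * u)))) :
    Tendsto (fun x => (∫ y in Set.Iic T, g (x - y) ∂W) / mtail F x) atTop
      (nhds (∫ y in Set.Iic T, c * Real.exp (γ * y) ∂W)) := by
  have hK0 : 0 ≤ K := by nlinarith [hpos 0, hg0 0, hgK 0]
  have heq : (fun x => (∫ y in Set.Iic T, g (x - y) ∂W) / mtail F x)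
      = fun x => ∫ y in Set.Iic T, g (x - y) / mtail F x ∂W := by
    ext x; rw [integral_div]
  rw [heq]
  refine tendsto_integral_filter_of_dominated_convergence
    (fun _ => K * (Real.exp (γ * T) + 1)) ?_ ?_ ?_ ?_
  · exact Eventually.of_forall fun x =>
      ((hgm.comp (measurable_const.sub measurable_id)).div_const _).aestronglyMeasurable
  · have hev : ∀ᶠ x in atTop, mtail F (x - T) / mtail F x < Real.exp (γ * T) + 1 :=
      (hL T).eventually_lt_const (by linarith)
    filter_upwards [hev] with x hx
    refine (ae_restrict_iff' measurableSet_Iic).2 (Eventually.of_forall fun y hy => ?_)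
    rw [Real.norm_eq_abs, abs_of_nonneg (div_nonneg (hg0 _) (hpos x).le)]
    have h1 : g (x - y) ≤ K * mtail F (x - T) :=
      le_trans (hganti (by linarith [Set.mem_Iic.1 hy])) (hgK _)
    have h2 : mtail F (x - T) ≤ (Real.exp (γ * T) + 1) * mtail F x := by
      rw [div_lt_iff₀ (hpos x)] at hx
      linarith
    rw [div_le_iff₀ (hpos x)]
    calc g (x - y) ≤ K * mtail F (x - T) := h1
      _ ≤ K * ((Real.exp (γ * T) + 1) * mtail F x) := by
          exact mul_le_mul_of_nonneg_left h2 hK0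
      _ = K * (Real.exp (γ * T) + 1) * mtail F x := by ring
  · exact integrable_const _
  · exact Eventually.of_forall fun y => hgt y


lemma exp_meas (γ : ℝ) : Measurable (fun z : ℝ => Real.exp (γ * z)) :=
  Real.measurable_exp.comp (measurable_id.const_mul γ)

lemma expE_meas (γ : ℝ) : Measurable (fun z : ℝ => ENNReal.ofReal (Real.exp (γ * z))) :=
  ENNReal.measurable_ofReal.comp (exp_meas γ)

lemma tendsto_b (γ : ℝ) (W : Measure ℝ) [IsFiniteMeasure W]
    (hint : Integrable (fun y => Real.exp (γ * y)) W) :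
    Tendsto (fun T : ℝ => ∫ y in Set.Iic T, Real.exp (γ * y) ∂W) atTop
      (nhds (∫ y, Real.exp (γ * y) ∂W)) := by
  have := tendsto_integral_filter_of_dominated_convergence (μ := W) (l := atTop)
    (F := fun T : ℝ => (Set.Iic T).indicator (fun y => Real.exp (γ * y)))
    (f := fun y => Real.exp (γ * y)) (bound := fun y => Real.exp (γ * y))
    (Eventually.of_forall fun T =>
      ((exp_meas γ).indicator measurableSet_Iic).aestronglyMeasurable)
    (Eventually.of_forall fun T => Eventually.of_forall fun y => by
      show ‖(Set.Iic T).indicator (fun y => Real.exp (γ * y)) y‖ ≤ Real.exp (γ * y)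
      rw [Real.norm_eq_abs]
      by_cases h : y ∈ Set.Iic T
      · rw [Set.indicator_of_mem h, abs_of_nonneg (Real.exp_pos _).le]
      · rw [Set.indicator_of_notMem h, abs_zero]
        exact (Real.exp_pos _).le)
    hint
    (Eventually.of_forall fun y => by
      show Tendsto (fun T : ℝ => (Set.Iic T).indicator (fun y => Real.exp (γ * y)) y) atTop
        (nhds (Real.exp (γ * y)))
      refine tendsto_const_nhds.congr' ?_
      filter_upwards [eventually_ge_atTop y] with T hT
      rw [Set.indicator_of_mem (Set.mem_Iic.2 hT)])
  exact this.congr fun T => integral_indicator measurableSet_Iic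

lemma lint_mgf_conv (γ : ℝ) (μ ν : Measure ℝ) [SFinite μ] [SFinite ν] :
    ∫⁻ z, ENNReal.ofReal (Real.exp (γ * z)) ∂(μ.conv ν)
      = (∫⁻ y, ENNReal.ofReal (Real.exp (γ * y)) ∂μ)
        * (∫⁻ u, ENNReal.ofReal (Real.exp (γ * u)) ∂ν) := by
  rw [Measure.conv, lintegral_map (expE_meas γ) measurable_add2]
  have h : ∀ p : ℝ × ℝ, ENNReal.ofReal (Real.exp (γ * (p.1 + p.2)))
      = ENNReal.ofReal (Real.exp (γ * p.1)) * ENNReal.ofReal (Real.exp (γ * p.2)) := by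
    intro p
    rw [mul_add, Real.exp_add, ENNReal.ofReal_mul (Real.exp_pos _).le]
  simp_rw [h]
  exact lintegral_prod_mul (expE_meas γ).aemeasurable (expE_meas γ).aemeasurable

lemma integrable_exp_iff (γ : ℝ) (μ : Measure ℝ) :
    Integrable (fun y => Real.exp (γ * y)) μ
      ↔ ∫⁻ y, ENNReal.ofReal (Real.exp (γ * y)) ∂μ < ⊤ := by
  constructor
  · intro h
    exact (hasFiniteIntegral_iff_ofReal
      (Eventually.of_forall fun y => (Real.exp_pos _).le)).1 h.2
  · intro h
    exact ⟨(exp_meas γ).aestronglyMeasurable,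
      (hasFiniteIntegral_iff_ofReal (Eventually.of_forall fun y => (Real.exp_pos _).le)).2 h⟩

lemma mgf_eq_lint (γ : ℝ) (μ : Measure ℝ) :
    mgfAt μ γ = (∫⁻ y, ENNReal.ofReal (Real.exp (γ * y)) ∂μ).toReal :=
  integral_eq_lintegral_of_nonneg_ae (Eventually.of_forall fun y => (Real.exp_pos _).le)
    (exp_meas γ).aestronglyMeasurable

lemma mgf_conv (γ : ℝ) (μ ν : Measure ℝ) [IsFiniteMeasure μ] [IsFiniteMeasure ν]
    (hμ : Integrable (fun y => Real.exp (γ * y)) μ)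
    (hν : Integrable (fun y => Real.exp (γ * y)) ν) :
    Integrable (fun y => Real.exp (γ * y)) (μ.conv ν)
      ∧ mgfAt (μ.conv ν) γ = mgfAt μ γ * mgfAt ν γ := by
  have h1 := (integrable_exp_iff γ μ).1 hμ
  have h2 := (integrable_exp_iff γ ν).1 hν
  have hconv := lint_mgf_conv γ μ ν
  constructor
  · rw [integrable_exp_iff, hconv]
    exact ENNReal.mul_lt_top h1 h2
  · rw [mgf_eq_lint, mgf_eq_lint, mgf_eq_lint, hconv, ENNReal.toReal_mul]

lemma exists_K (F V : Measure ℝ) [IsFiniteMeasure F] [IsProbabilityMeasure V]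
    (hpos : ∀ x, 0 < mtail F x) (c : ℝ)
    (hc : Tendsto (fun x => mtail V x / mtail F x) atTop (nhds c)) :
    ∃ K, 0 ≤ K ∧ ∀ z, mtail V z ≤ K * mtail F z := by
  obtain ⟨z₀, hz₀⟩ := eventually_atTop.1 (hc.eventually_le_const (lt_add_one c))
  refine ⟨max (c + 1) (1 / mtail F z₀), le_max_of_le_right (one_div_nonneg.2 (mtail_nonneg F z₀)), fun z => ?_⟩
  rcases le_or_gt z₀ z with h | h
  · have := hz₀ z h
    rw [div_le_iff₀ (hpos z)] at this
    calc mtail V z ≤ (c + 1) * mtail F z := this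
      _ ≤ max (c + 1) (1 / mtail F z₀) * mtail F z :=
          mul_le_mul_of_nonneg_right (le_max_left _ _) (mtail_nonneg F z)
  · have h1 : mtail V z ≤ 1 := mtail_le_one V z
    have h2 : mtail F z₀ ≤ mtail F z := mtail_anti F h.le
    have h3 : (1 : ℝ) ≤ (1 / mtail F z₀) * mtail F z := by
      rw [one_div, inv_mul_eq_div, le_div_iff₀ (hpos z₀)]
      linarith
    calc mtail V z ≤ 1 := h1
      _ ≤ (1 / mtail F z₀) * mtail F z := h3
      _ ≤ max (c + 1) (1 / mtail F z₀) * mtail F z :=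
          mul_le_mul_of_nonneg_right (le_max_right _ _) (mtail_nonneg F z)

lemma integrable_of_memS (F : Measure ℝ) [IsProbabilityMeasure F] (γ : ℝ) (hγ : 0 ≤ γ)
    (hS : memS F γ) : Integrable (fun y => Real.exp (γ * y)) F := by
  have hpos := fun x => mtail_pos (μ := F) hS.1 x
  set M := 2 * mgfAt F γ with hM
  have bound : ∀ T : ℝ, ∫ y in Set.Iic T, Real.exp (γ * y) ∂F ≤ M := by
    intro T
    have h1 : Tendsto (fun x => (∫ y in Set.Iic T, mtail F (x - y) ∂F) / mtail F x) atTop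
        (nhds (∫ y in Set.Iic T, 1 * Real.exp (γ * y) ∂F)) :=
      tendsto_term γ T 1 1 F F hS.1 hpos (mtail F) (mtail_anti F) (measurable_mtail F)
        (mtail_nonneg F) (fun z => (one_mul (mtail F z)).symm ▸ le_refl _)
        (fun u => by simpa using hS.1 u)
    have hle : ∀ᶠ x in atTop,
        (∫ y in Set.Iic T, mtail F (x - y) ∂F) / mtail F x
          ≤ mtail (F.conv F) x / mtail F x := by
      refine Eventually.of_forall fun x => ?_
      simp only [div_eq_mul_inv]
      exact mul_le_mul_of_nonneg_right (tail_ge_S1 F F T x)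
        (inv_nonneg.2 (mtail_nonneg F x))
    have := le_of_tendsto_of_tendsto h1 hS.2 hle
    simpa using this
  have hM0 : 0 ≤ M := le_trans (integral_nonneg fun y => (Real.exp_pos _).le) (bound 0)
  have hFT : ∀ T : ℝ, ∫⁻ y in Set.Iic T, ENNReal.ofReal (Real.exp (γ * y)) ∂F
      ≤ ENNReal.ofReal M := by
    intro T
    have hfin : ∫⁻ y in Set.Iic T, ENNReal.ofReal (Real.exp (γ * y)) ∂F
        ≤ ENNReal.ofReal (Real.exp (γ * T)) * F (Set.Iic T) := by
      rw [← setLIntegral_const]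
      refine setLIntegral_mono (measurable_const) fun y hy => ?_
      exact ENNReal.ofReal_le_ofReal (Real.exp_le_exp.2
        (mul_le_mul_of_nonneg_left (Set.mem_Iic.1 hy) hγ))
    have hne : ∫⁻ y in Set.Iic T, ENNReal.ofReal (Real.exp (γ * y)) ∂F ≠ ⊤ :=
      ne_top_of_le_ne_top (by finiteness) hfin
    have htr : (∫⁻ y in Set.Iic T, ENNReal.ofReal (Real.exp (γ * y)) ∂F).toReal
        = ∫ y in Set.Iic T, Real.exp (γ * y) ∂F := by
      rw [integral_eq_lintegral_of_nonneg_ae (Eventually.of_forall fun y => (Real.exp_pos _).le)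
        (exp_meas γ).aestronglyMeasurable]
    calc ∫⁻ y in Set.Iic T, ENNReal.ofReal (Real.exp (γ * y)) ∂F
        = ENNReal.ofReal ((∫⁻ y in Set.Iic T, ENNReal.ofReal (Real.exp (γ * y)) ∂F).toReal) :=
          (ENNReal.ofReal_toReal hne).symm
      _ ≤ ENNReal.ofReal M := ENNReal.ofReal_le_ofReal (htr ▸ bound T)
  have hfull : ∫⁻ y, ENNReal.ofReal (Real.exp (γ * y)) ∂F ≤ ENNReal.ofReal M := by
    have hmono : Monotone (fun n : ℕ =>
        (Set.Iic ((n : ℝ))).indicator (fun y => ENNReal.ofReal (Real.exp (γ * y)))) := by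
      intro m n hmn
      exact Set.indicator_le_indicator_of_subset
        (Set.Iic_subset_Iic.2 (by exact_mod_cast hmn)) (fun y => zero_le)
    have hcov : ∀ y : ℝ, (⨆ n : ℕ, (Set.Iic ((n : ℝ))).indicator
        (fun y => ENNReal.ofReal (Real.exp (γ * y))) y) = ENNReal.ofReal (Real.exp (γ * y)) := by
      intro y
      refine le_antisymm (iSup_le fun n => Set.indicator_le_self' (fun _ _ => zero_le) y) ?_
      obtain ⟨n, hn⟩ := exists_nat_ge y
      refine le_trans ?_ (le_iSup _ n)
      rw [Set.indicator_of_mem (Set.mem_Iic.2 hn)]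
    have : ∫⁻ y, ENNReal.ofReal (Real.exp (γ * y)) ∂F
        = ⨆ n : ℕ, ∫⁻ y in Set.Iic ((n : ℝ)), ENNReal.ofReal (Real.exp (γ * y)) ∂F := by
      conv_lhs => rw [show (fun y : ℝ => ENNReal.ofReal (Real.exp (γ * y)))
        = fun y => ⨆ n : ℕ, (Set.Iic ((n : ℝ))).indicator
          (fun y => ENNReal.ofReal (Real.exp (γ * y))) y from funext fun y => (hcov y).symm]
      rw [lintegral_iSup (fun n => (expE_meas γ).indicator measurableSet_Iic) hmono]
      congr 1
      ext n
      rw [lintegral_indicator measurableSet_Iic]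
    rw [this]
    exact iSup_le fun n => hFT _
  exact (integrable_exp_iff γ F).2 (lt_of_le_of_lt hfull ENNReal.ofReal_lt_top)


lemma key (F V : Measure ℝ) [IsProbabilityMeasure F] [IsProbabilityMeasure V]
    (γ c : ℝ) (hS : memS F γ)
    (hFint : Integrable (fun y => Real.exp (γ * y)) F)
    (hVint : Integrable (fun y => Real.exp (γ * y)) V)
    (hc : Tendsto (fun x => mtail V x / mtail F x) atTop (nhds c)) :
    Tendsto (fun x => mtail (V.conv F) x / mtail F x) atTop
      (nhds (c * mgfAt F γ + mgfAt V γ)) := by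
  have hL := hS.1
  have hpos : ∀ x, 0 < mtail F x := fun x => mtail_pos hL x
  obtain ⟨K, hK0, hK⟩ := exists_K F V hpos c hc
  rw [Metric.tendsto_atTop]
  intro ε hε
  set ε' := ε / 9 with hε'def
  have hε' : 0 < ε' := by positivity
  set δ := ε' / (2 * K + |c| + 1) with hδdef
  have hδ : 0 < δ := by positivity
  set η := ε' / (K + 1) with hηdef
  have hη : 0 < η := by positivity
  set Fh := mgfAt F γ with hFh
  set Vh := mgfAt V γ with hVh
  -- choose T
  obtain ⟨N1, hN1⟩ := Metric.tendsto_atTop.1 (tendsto_b γ V hVint) ε' hε'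
  obtain ⟨N2, hN2⟩ := Metric.tendsto_atTop.1 (tendsto_b γ F hFint) δ hδ
  set T := max N1 N2 with hT
  have hTa : dist (∫ y in Set.Iic T, Real.exp (γ * y) ∂V) Vh < ε' := hN1 T (le_max_left _ _)
  have hTb : dist (∫ y in Set.Iic T, Real.exp (γ * y) ∂F) Fh < δ := hN2 T (le_max_right _ _)
  set A := ∫ y in Set.Iic T, Real.exp (γ * y) ∂V with hA
  set B := ∫ y in Set.Iic T, Real.exp (γ * y) ∂F with hB
  -- x-limits
  have W1 : Tendsto (fun x => (∫ y in Set.Iic T, mtail F (x - y) ∂V) / mtail F x) atTop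
      (nhds A) := by
    have := tendsto_term γ T 1 1 F V hL hpos (mtail F) (mtail_anti F) (measurable_mtail F)
      (mtail_nonneg F) (fun z => (one_mul (mtail F z)).symm ▸ le_refl _)
      (fun u => by simpa using hL u)
    simpa using this
  have hVFt : ∀ u : ℝ, Tendsto (fun x => mtail V (x - u) / mtail F x) atTop
      (nhds (c * Real.exp (γ * u))) := by
    intro u
    have hshift : Tendsto (fun x : ℝ => x - u) atTop atTop :=
      (tendsto_atTop_add_const_right atTop (-u) tendsto_id).congr
        (fun x => (sub_eq_add_neg x u).symm)
    have h1 : Tendsto (fun x => mtail V (x - u) / mtail F (x - u)) atTop (nhds c) :=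
      hc.comp hshift
    refine (h1.mul (hL u)).congr fun x => ?_
    rw [div_mul_div_comm, mul_comm (mtail F (x - u)) (mtail F x),
      mul_div_mul_right _ _ (hpos (x - u)).ne']
  have W2 : Tendsto (fun x => (∫ u in Set.Iic T, mtail V (x - u) ∂F) / mtail F x) atTop
      (nhds (c * B)) := by
    have := tendsto_term γ T c K F F hL hpos (mtail V) (mtail_anti V) (measurable_mtail V)
      (mtail_nonneg V) hK hVFt
    rw [integral_const_mul] at this
    exact this
  have W3 : Tendsto (fun x => (∫ y in Set.Iic T, mtail F (x - y) ∂F) / mtail F x) atTop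
      (nhds B) := by
    have := tendsto_term γ T 1 1 F F hL hpos (mtail F) (mtail_anti F) (measurable_mtail F)
      (mtail_nonneg F) (fun z => (one_mul (mtail F z)).symm ▸ le_refl _)
      (fun u => by simpa using hL u)
    simpa using this
  -- eventual bounds in x
  have ev1 := Metric.tendsto_nhds.mp W1 ε' hε'
  have ev2 := Metric.tendsto_nhds.mp W2 ε' hε'
  have ev3 := Metric.tendsto_nhds.mp W3 η hη
  have ev5 := Metric.tendsto_nhds.mp hS.2 η hη
  have evx := eventually_ge_atTop (2 * T)
  obtain ⟨N, hN⟩ := eventually_atTop.1 (((ev1.and ev2).and (ev3.and ev5)).and evx)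
  refine ⟨N, fun x hx => ?_⟩
  obtain ⟨⟨⟨h1, h2⟩, ⟨h3, h5⟩⟩, hx2T⟩ := hN x hx
  -- notation
  set f := mtail F x with hf
  set t1 := ∫ y in Set.Iic T, mtail F (x - y) ∂V with ht1
  set t2 := ∫ u in Set.Iic T, mtail V (x - u) ∂F with ht2
  set t1F := ∫ y in Set.Iic T, mtail F (x - y) ∂F with ht1F
  set r := ((V.prod F) (S3 T x)).toReal with hr
  set rF := ((F.prod F) (S3 T x)).toReal with hrF
  have hdec : mtail (V.conv F) x = t1 + t2 + r := decomp V F T x hx2T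
  have hdecF : mtail (F.conv F) x = t1F + t1F + rF := decomp F F T x hx2T
  have hrle : r ≤ K * rF := S3_le V F F K hK0 hK T x
  have hr0 : 0 ≤ r := ENNReal.toReal_nonneg
  have hfpos : 0 < f := hpos x
  -- unpack dist hypotheses
  rw [Real.dist_eq, abs_lt] at h1 h2 h3 h5 hTa hTb
  -- bound rF
  have hFFlt : mtail (F.conv F) x < (2 * Fh + η) * f := by
    have h5' : mtail (F.conv F) x / f < 2 * Fh + η := by rw [hFh]; linarith [h5.2]
    rw [div_lt_iff₀ hfpos] at h5'
    exact h5'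
  have ht1Fgt : (B - η) * f < t1F := by
    have : B - η < t1F / f := by linarith [h3.1]
    exact (lt_div_iff₀ hfpos).1 this
  have hrFlt : rF < (2 * (Fh - B) + 3 * η) * f := by
    have e : (2 * (Fh - B) + 3 * η) * f = (2 * Fh + η) * f - 2 * ((B - η) * f) := by ring
    rw [e]; linarith
  have hFB : Fh - B ≤ δ := by linarith [hTb.1]
  have hKbound : K * (2 * (Fh - B) + 3 * η) ≤ 4 * ε' := by
    have e1 : K * (2 * (Fh - B)) ≤ K * (2 * δ) :=
      mul_le_mul_of_nonneg_left (by linarith) hK0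
    have e2 : 2 * K * δ ≤ ε' := by
      have hd : 2 * K / (2 * K + |c| + 1) ≤ 1 := by
        rw [div_le_one (by positivity)]
        have := abs_nonneg c
        linarith
      calc 2 * K * δ = ε' * (2 * K / (2 * K + |c| + 1)) := by rw [hδdef]; ring
        _ ≤ ε' * 1 := mul_le_mul_of_nonneg_left hd hε'.le
        _ = ε' := mul_one _
    have e3 : 3 * K * η ≤ 3 * ε' := by
      have hd : K / (K + 1) ≤ 1 := by
        rw [div_le_one (by positivity)]
        linarith
      calc 3 * K * η = 3 * (ε' * (K / (K + 1))) := by rw [hηdef]; ring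
        _ ≤ 3 * (ε' * 1) := by
            have := mul_le_mul_of_nonneg_left hd hε'.le
            linarith
        _ = 3 * ε' := by ring
    have e0 : K * (2 * (Fh - B) + 3 * η) = K * (2 * (Fh - B)) + 3 * K * η := by ring
    have e1' : K * (2 * δ) = 2 * K * δ := by ring
    linarith
  have hrdivf : r / f ≤ 4 * ε' := by
    rw [div_le_iff₀ hfpos]
    have e4 : K * rF ≤ K * ((2 * (Fh - B) + 3 * η) * f) :=
      mul_le_mul_of_nonneg_left hrFlt.le hK0
    have e5 : K * ((2 * (Fh - B) + 3 * η) * f) ≤ (4 * ε') * f := by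
      have h6 := mul_le_mul_of_nonneg_right hKbound hfpos.le
      have e6 : K * ((2 * (Fh - B) + 3 * η) * f) = K * (2 * (Fh - B) + 3 * η) * f := by ring
      linarith
    linarith
  have hrdivf0 : 0 ≤ r / f := div_nonneg hr0 hfpos.le
  -- conclude
  have hsplit : mtail (V.conv F) x / f = t1 / f + t2 / f + r / f := by
    rw [hdec]; ring
  rw [Real.dist_eq, abs_lt]
  have hcB : |c * B - c * Fh| ≤ |c| * δ := by
    rw [← mul_sub, abs_mul]
    exact mul_le_mul_of_nonneg_left (abs_le.2 ⟨by linarith [hTb.2], by linarith [hTb.1]⟩)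
      (abs_nonneg c)
  have hcd : |c| * δ ≤ ε' := by
    have hd : |c| / (2 * K + |c| + 1) ≤ 1 := by
      rw [div_le_one (by positivity)]
      linarith
    calc |c| * δ = ε' * (|c| / (2 * K + |c| + 1)) := by rw [hδdef]; ring
      _ ≤ ε' * 1 := mul_le_mul_of_nonneg_left hd hε'.le
      _ = ε' := mul_one _
  rw [abs_le] at hcB
  constructor
  · rw [hsplit]
    have h9 : ε' * 9 = ε := by rw [hε'def]; ring
    linarith [h1.1, h2.1, hTa.1, hcB.1, hcd, hrdivf0, hrdivf]
  · rw [hsplit]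
    have h9 : ε' * 9 = ε := by rw [hε'def]; ring
    linarith [h1.2, h2.2, hTa.2, hcB.2, hcd, hrdivf0, hrdivf]


lemma convPow_prob (F : Measure ℝ) [IsProbabilityMeasure F] (n : ℕ) :
    IsProbabilityMeasure (convPow F n) := by
  induction n with
  | zero => exact Measure.dirac.isProbabilityMeasure
  | succ n ih =>
    haveI := ih
    show IsProbabilityMeasure ((convPow F n).conv F)
    infer_instance

lemma convPow_one (F : Measure ℝ) [IsProbabilityMeasure F] : convPow F 1 = F := by
  show Measure.conv (Measure.dirac 0) F = F
  exact Measure.dirac_zero_conv F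

lemma convPow_mgf (F : Measure ℝ) [IsProbabilityMeasure F] (γ : ℝ)
    (hFint : Integrable (fun y => Real.exp (γ * y)) F) (n : ℕ) (hn : 1 ≤ n) :
    Integrable (fun y => Real.exp (γ * y)) (convPow F n)
      ∧ mgfAt (convPow F n) γ = (mgfAt F γ) ^ n := by
  induction n with
  | zero => omega
  | succ n ih =>
    rcases Nat.eq_or_lt_of_le hn with h1 | h1
    · rw [← h1]
      rw [show (1 : ℕ) = 0 + 1 from rfl] at *
      rw [convPow_one F]
      exact ⟨hFint, by rw [pow_one]⟩
    · have hn' : 1 ≤ n := by omega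
      obtain ⟨ih1, ih2⟩ := ih hn'
      haveI := convPow_prob F n
      have h := mgf_conv γ (convPow F n) F ih1 hFint
      refine ⟨h.1, ?_⟩
      show mgfAt ((convPow F n).conv F) γ = _
      rw [h.2, ih2, pow_succ]


end StmtAux

open StmtAux in
theorem stmt6 (F : Measure ℝ) [IsProbabilityMeasure F] (γ : ℝ) (hγ : 0 ≤ γ)
    (hS : memS F γ) (n : ℕ) (hn : 1 ≤ n) :
    Tendsto (fun x => mtail (convPow F n) x / mtail F x) atTop
      (nhds (n * mgfAt F γ ^ (n - 1))) := by
  have hFint := integrable_of_memS F γ hγ hS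
  induction n with
  | zero => omega
  | succ n ih =>
    rcases Nat.eq_or_lt_of_le hn with h1 | h1
    · rw [← h1]
      rw [show (1 : ℕ) = 0 + 1 from rfl] at *
      rw [convPow_one F]
      have : Tendsto (fun x => mtail F x / mtail F x) atTop (nhds 1) := by
        refine tendsto_const_nhds.congr fun x => ?_
        rw [div_self (mtail_pos hS.1 x).ne']
      simpa using this
    · have hn' : 1 ≤ n := by omega
      have IH := ih hn'
      haveI := convPow_prob F n
      obtain ⟨hVint, hVmgf⟩ := convPow_mgf F γ hFint n hn'
      have hkey := key F (convPow F n) γ ((n : ℝ) * mgfAt F γ ^ (n - 1)) hS hFint hVint IH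
      have harith : (n : ℝ) * mgfAt F γ ^ (n - 1) * mgfAt F γ + mgfAt (convPow F n) γ
          = ((n : ℕ) + 1 : ℝ) * mgfAt F γ ^ n := by
        rw [hVmgf]
        have hp : mgfAt F γ ^ (n - 1) * mgfAt F γ = mgfAt F γ ^ n := by
          rw [← pow_succ]
          congr 1
          omega
        rw [mul_assoc, hp]
        ring
      rw [harith] at hkey
      have hconv : convPow F (n + 1) = (convPow F n).conv F := rfl
      rw [hconv]
      have hcast : ((n + 1 : ℕ) : ℝ) * mgfAt F γ ^ (n + 1 - 1) = ((n : ℕ) + 1 : ℝ) * mgfAt F γ ^ n := by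
        push_cast
        congr 2
      rw [hcast]
      exact hkey
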